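/- Let E be a real Banach space, let r be a real number, and let G : E → E be a map that is differentiable at every point of E \ {0}. Then the following are equivalent: (i) G is positively homogeneous of degree r, i.e. G(λ • v) = λ^r • G(v) for all real λ > 0 and all v ≠ 0; (ii) (fderiv ℝ G v)(v) = r • G(v) for all v ∈ E \ {0}. -/

import Mathlib

/-!
Differentiating `G (l • v) = l ^ r • G v` in `l` at `l = 1` gives the Euler identity. Conversely,
the Euler identity on the ray through `v` says exactly that `t ↦ t ^ (-r) • G (t • v)` has zero
derivative on `(0, ∞)`, so it is constant there, equal to its value `G v` at `t = 1`.
-/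

open Set

section

variable {E F : Type*} [NormedAddCommGroup E] [NormedSpace ℝ E]
  [NormedAddCommGroup F] [NormedSpace ℝ F] {G : E → F} {r : ℝ} {v : E}

theorem hasDerivAt_comp_smul_const {t : ℝ} (hG : DifferentiableAt ℝ G (t • v)) :
    HasDerivAt (fun s : ℝ => G (s • v)) (fderiv ℝ G (t • v) v) t := by
  have hline : HasDerivAt (fun s : ℝ => s • v) v t := by
    simpa using (hasDerivAt_id t).smul_const v
  exact hG.hasFDerivAt.comp_hasDerivAt t hline

theorem fderiv_apply_self_of_homogeneous (hG : DifferentiableAt ℝ G v)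
    (hom : ∀ l : ℝ, 0 < l → G (l • v) = l ^ r • G v) :
    fderiv ℝ G v v = r • G v := by
  have hlin : HasDerivAt (fun l : ℝ => G (l • v)) (fderiv ℝ G v v) 1 := by
    simpa using hasDerivAt_comp_smul_const (t := 1) (by rwa [one_smul])
  have hpow : HasDerivAt (fun l : ℝ => l ^ r • G v) (r • G v) 1 := by
    simpa using (Real.hasDerivAt_rpow_const (p := r) (Or.inl one_ne_zero)).smul_const (G v)
  have heq : (fun l : ℝ => G (l • v)) =ᶠ[nhds 1] fun l => l ^ r • G v :=
    Filter.eventually_of_mem (Ioi_mem_nhds one_pos) hom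
  exact hlin.unique (hpow.congr_of_eventuallyEq heq)

theorem hasDerivAt_rpow_neg_smul_comp_smul_eq_zero {t : ℝ} (ht : 0 < t)
    (hG : DifferentiableAt ℝ G (t • v)) (euler : fderiv ℝ G (t • v) (t • v) = r • G (t • v)) :
    HasDerivAt (fun s : ℝ => s ^ (-r) • G (s • v)) 0 t := by
  have hray : fderiv ℝ G (t • v) v = (r / t) • G (t • v) := by
    rw [map_smul, ← eq_inv_smul_iff₀ ht.ne'] at euler
    rw [euler, smul_smul, div_eq_inv_mul]
  have hpow : HasDerivAt (fun s : ℝ => s ^ (-r)) (-r * t ^ (-r - 1)) t :=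
    Real.hasDerivAt_rpow_const (Or.inl ht.ne')
  have hcoeff : t ^ (-r) * (r / t) + -r * t ^ (-r - 1) = 0 := by
    rw [Real.rpow_sub ht, Real.rpow_one]
    field_simp
    ring
  have := hpow.smul (hasDerivAt_comp_smul_const hG)
  rwa [hray, smul_smul, ← add_smul, hcoeff, zero_smul] at this

theorem homogeneous_of_fderiv_apply_self (hG : ∀ t : ℝ, 0 < t → DifferentiableAt ℝ G (t • v))
    (euler : ∀ t : ℝ, 0 < t → fderiv ℝ G (t • v) (t • v) = r • G (t • v))
    {l : ℝ} (hl : 0 < l) : G (l • v) = l ^ r • G v := by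
  have hderiv (t : ℝ) (ht : t ∈ Ioi 0) :
      HasDerivAt (fun s : ℝ => s ^ (-r) • G (s • v)) 0 t :=
    hasDerivAt_rpow_neg_smul_comp_smul_eq_zero ht (hG t ht) (euler t ht)
  have hconst : l ^ (-r) • G (l • v) = (1 : ℝ) ^ (-r) • G ((1 : ℝ) • v) :=
    isOpen_Ioi.is_const_of_deriv_eq_zero isPreconnected_Ioi
      (fun t ht => (hderiv t ht).differentiableAt.differentiableWithinAt)
      (fun t ht => (hderiv t ht).deriv) hl (mem_Ioi.mpr one_pos)
  rw [Real.one_rpow, one_smul, one_smul, Real.rpow_neg hl.le, inv_smul_eq_iff₀] at hconst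
  · exact hconst
  · exact (Real.rpow_pos_of_pos hl r).ne'

end

theorem euler_homogeneous_iff_general
    {E : Type*} [NormedAddCommGroup E] [NormedSpace ℝ E]
    (r : ℝ) (G : E → E)
    (hG : ∀ v : E, v ≠ 0 → DifferentiableAt ℝ G v) :
    (∀ l : ℝ, 0 < l → ∀ v : E, v ≠ 0 → G (l • v) = l ^ r • G v) ↔
      (∀ v : E, v ≠ 0 → fderiv ℝ G v v = r • G v) := by
  constructor
  · intro hom v hv
    exact fderiv_apply_self_of_homogeneous (hG v hv) fun l hl => hom l hl v hv
  · intro euler l hl v hv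
    have hray (t : ℝ) (ht : 0 < t) : t • v ≠ 0 := smul_ne_zero ht.ne' hv
    exact homogeneous_of_fderiv_apply_self (fun t ht => hG _ (hray t ht))
      (fun t ht => euler _ (hray t ht)) hl

/-- Euler's theorem for positively homogeneous maps on a real Banach space:
for `G : E → E` differentiable away from the origin, positive homogeneity of
degree `r` is equivalent to the Euler identity `(fderiv ℝ G v) v = r • G v`. -/
theorem euler_homogeneous_iff
    {E : Type*} [NormedAddCommGroup E] [NormedSpace ℝ E] [CompleteSpace E]
    (r : ℝ) (G : E → E)
    (hG : ∀ v : E, v ≠ 0 → DifferentiableAt ℝ G v) :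
    (∀ l : ℝ, 0 < l → ∀ v : E, v ≠ 0 → G (l • v) = l ^ r • G v) ↔
      (∀ v : E, v ≠ 0 → fderiv ℝ G v v = r • G v) :=
  euler_homogeneous_iff_general r G hG
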